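/- arXiv:2002.11199 — 3 statements merged into one kernel-verified Lean document; each statement's English description precedes it below -/
import Mathlib

section
/- If a compact metric dynamical system (X,f) has unique shadowing, then it has unique h-shadowing. -/
open Filter Topology Function

variable {X : Type*} [MetricSpace X]

/-- A (forward) `δ`-pseudo-orbit. -/
def PseudoOrbit (f : X → X) (δ : ℝ) (x : ℕ → X) : Prop :=
  ∀ i, dist (f (x i)) (x (i + 1)) < δ

/-- The orbit of `z` `ε`-shadows the sequence `x`. -/
def ShadowsFrom (f : X → X) (ε : ℝ) (z : X) (x : ℕ → X) : Prop :=
  ∀ i, dist (f^[i] z) (x i) < ε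

/-- Classical shadowing. -/
def HasShadowing (f : X → X) : Prop :=
  ∀ ε > 0, ∃ δ > 0, ∀ x : ℕ → X, PseudoOrbit f δ x → ∃ z, ShadowsFrom f ε z x

/-- A full (two-sided) orbit. -/
def FullOrbit (f : X → X) (z : ℤ → X) : Prop := ∀ i : ℤ, f (z i) = z (i + 1)

/-- A two-sided `δ`-pseudo-orbit. -/
def TwoSidedPseudoOrbit (f : X → X) (δ : ℝ) (x : ℤ → X) : Prop :=
  ∀ i : ℤ, dist (f (x i)) (x (i + 1)) < δ

/-- Two-sided shadowing. -/
def HasTwoSidedShadowing (f : X → X) : Prop :=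
  ∀ ε > 0, ∃ δ > 0, ∀ x : ℤ → X, TwoSidedPseudoOrbit f δ x →
    ∃ z : ℤ → X, FullOrbit f z ∧ ∀ i, dist (z i) (x i) < ε

/-- A backwards `δ`-pseudo-orbit (indexed by nonpositive integers). -/
def BackwardPseudoOrbit (f : X → X) (δ : ℝ) (x : ℤ → X) : Prop :=
  ∀ i < (0 : ℤ), dist (f (x i)) (x (i + 1)) < δ

/-- A backwards orbit. -/
def BackwardOrbit (f : X → X) (z : ℤ → X) : Prop := ∀ i < (0 : ℤ), f (z i) = z (i + 1)

/-- Backwards shadowing. -/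
def HasBackwardShadowing (f : X → X) : Prop :=
  ∀ ε > 0, ∃ δ > 0, ∀ x : ℤ → X, BackwardPseudoOrbit f δ x →
    ∃ z : ℤ → X, BackwardOrbit f z ∧ ∀ i ≤ (0 : ℤ), dist (z i) (x i) < ε

/-- An asymptotic pseudo-orbit. -/
def AsymptoticPseudoOrbit (f : X → X) (x : ℕ → X) : Prop :=
  Tendsto (fun i => dist (f (x i)) (x (i + 1))) atTop (nhds 0)

/-- s-limit shadowing. -/
def HasSLimitShadowing (f : X → X) : Prop :=
  HasShadowing f ∧ ∀ ε > 0, ∃ δ > 0, ∀ x : ℕ → X,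
    PseudoOrbit f δ x → AsymptoticPseudoOrbit f x →
    ∃ z, ShadowsFrom f ε z x ∧ Tendsto (fun i => dist (f^[i] z) (x i)) atTop (nhds 0)

/-- Two-sided asymptotic pseudo-orbit condition. -/
def TwoSidedAsymptotic (f : X → X) (x : ℤ → X) : Prop :=
  Tendsto (fun i => dist (f (x i)) (x (i + 1))) atTop (nhds 0) ∧
  Tendsto (fun i => dist (f (x i)) (x (i + 1))) atBot (nhds 0)

/-- The L-shadowing condition: two-sided asymptotic pseudo-orbits are
asymptotically shadowed by full orbits. -/
def HasLShadowing (f : X → X) : Prop :=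
  ∀ ε > 0, ∃ δ > 0, ∀ x : ℤ → X,
    TwoSidedPseudoOrbit f δ x → TwoSidedAsymptotic f x →
    ∃ z : ℤ → X, FullOrbit f z ∧ (∀ i, dist (z i) (x i) < ε) ∧
      Tendsto (fun i => dist (z i) (x i)) atTop (nhds 0) ∧
      Tendsto (fun i => dist (z i) (x i)) atBot (nhds 0)

/-- Two-sided s-limit shadowing. -/
def HasTwoSidedSLimitShadowing (f : X → X) : Prop :=
  HasTwoSidedShadowing f ∧ HasLShadowing f

/-- Backwards asymptotic pseudo-orbit condition. -/
def BackwardAsymptotic (f : X → X) (x : ℤ → X) : Prop :=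
  Tendsto (fun i => dist (f (x i)) (x (i + 1))) atBot (nhds 0)

/-- Backwards s-limit shadowing. -/
def HasBackwardSLimitShadowing (f : X → X) : Prop :=
  HasBackwardShadowing f ∧ ∀ ε > 0, ∃ δ > 0, ∀ x : ℤ → X,
    BackwardPseudoOrbit f δ x → BackwardAsymptotic f x →
    ∃ z : ℤ → X, BackwardOrbit f z ∧ (∀ i ≤ (0 : ℤ), dist (z i) (x i) < ε) ∧
      Tendsto (fun i => dist (z i) (x i)) atBot (nhds 0)

/-- A set has at most `n` points. -/
def AtMostCard (S : Set X) (n : ℕ) : Prop := ∃ F : Finset X, F.card ≤ n ∧ S ⊆ ↑F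

/-- Positively `n`-expansive. -/
def PosNExpansive (f : X → X) (n : ℕ) : Prop :=
  ∃ r > 0, ∀ x : X, AtMostCard {y | ∀ k : ℕ, dist (f^[k] x) (f^[k] y) < r} n

/-- `n`-expansive (two-sided). -/
def NExpansive (f : X → X) (n : ℕ) : Prop :=
  ∃ r > 0, ∀ x : ℤ → X, FullOrbit f x →
    AtMostCard {y0 | ∃ y : ℤ → X, FullOrbit f y ∧ y 0 = y0 ∧ ∀ i, dist (x i) (y i) < r} n

/-- `n`-shadowing. -/
def HasNShadowing (f : X → X) (n : ℕ) : Prop :=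
  ∃ η > 0, ∀ ε, 0 < ε → ε < η → ∃ δ > 0, ∀ x : ℕ → X, PseudoOrbit f δ x →
    (∃ z, ShadowsFrom f ε z x) ∧ AtMostCard {z | ShadowsFrom f ε z x} n

/-- Two-sided `n`-shadowing. -/
def HasTwoSidedNShadowing (f : X → X) (n : ℕ) : Prop :=
  ∃ η > 0, ∀ ε, 0 < ε → ε < η → ∃ δ > 0, ∀ x : ℤ → X, TwoSidedPseudoOrbit f δ x →
    (∃ z : ℤ → X, FullOrbit f z ∧ ∀ i, dist (z i) (x i) < ε) ∧
    AtMostCard {z0 | ∃ z : ℤ → X, FullOrbit f z ∧ z 0 = z0 ∧ ∀ i, dist (z i) (x i) < ε} n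

/-- h-shadowing. -/
def HasHShadowing (f : X → X) : Prop :=
  ∀ ε > 0, ∃ δ > 0, ∀ (m : ℕ) (x : ℕ → X),
    (∀ i < m, dist (f (x i)) (x (i + 1)) < δ) →
    ∃ z, (∀ i ≤ m, dist (f^[i] z) (x i) < ε) ∧ f^[m] z = x m

/-- Unique shadowing (`1`-shadowing). -/
def HasUniqueShadowing (f : X → X) : Prop :=
  ∃ η > 0, ∀ ε, 0 < ε → ε < η → ∃ δ > 0, ∀ x : ℕ → X, PseudoOrbit f δ x →
    ∃! z, ShadowsFrom f ε z x

/-- Unique s-limit shadowing. -/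
def HasUniqueSLimitShadowing (f : X → X) : Prop :=
  HasUniqueShadowing f ∧ ∃ η > 0, ∀ ε, 0 < ε → ε < η → ∃ δ > 0, ∀ x : ℕ → X,
    PseudoOrbit f δ x → AsymptoticPseudoOrbit f x →
    ∃! z, ShadowsFrom f ε z x ∧ Tendsto (fun i => dist (f^[i] z) (x i)) atTop (nhds 0)

/-- Unique h-shadowing. -/
def HasUniqueHShadowing (f : X → X) : Prop :=
  ∃ η > 0, ∀ ε, 0 < ε → ε < η → ∃ δ > 0, ∀ (m : ℕ) (x : ℕ → X),
    (∀ i < m, dist (f (x i)) (x (i + 1)) < δ) →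
    ∃! z, (∀ i ≤ m, dist (f^[i] z) (x i) < ε) ∧ f^[m] z = x m

/-- Limit shadowing. -/
def HasLimitShadowing (f : X → X) : Prop :=
  ∀ x : ℕ → X, AsymptoticPseudoOrbit f x →
    ∃ z, Tendsto (fun i => dist (f^[i] z) (x i)) atTop (nhds 0)

/-- Unique limit shadowing. -/
def HasUniqueLimitShadowing (f : X → X) : Prop :=
  ∀ x : ℕ → X, AsymptoticPseudoOrbit f x →
    ∃! z, Tendsto (fun i => dist (f^[i] z) (x i)) atTop (nhds 0)

/-- c-expansivity. -/
def CExpansive (f : X → X) : Prop :=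
  ∃ η > 0, ∀ x y : ℤ → X, FullOrbit f x → FullOrbit f y →
    (∀ i, dist (x i) (y i) < η) → x 0 = y 0

/-- Positive expansivity. -/
def PosExpansive (f : X → X) : Prop :=
  ∃ r > 0, ∀ x : X, {y | ∀ k : ℕ, dist (f^[k] x) (f^[k] y) < r} = {x}

/-- Topological mixing. -/
def Mixing (f : X → X) : Prop :=
  ∀ U V : Set X, IsOpen U → IsOpen V → U.Nonempty → V.Nonempty →
    ∃ N, ∀ n ≥ N, (f^[n] '' U ∩ V).Nonempty

/-!
Extend a finite `δ`-pseudo-orbit `x₀, …, xₘ` by the true orbit of `xₘ`. Both `fᵐ z`, for the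
unique point `z` shadowing the extension, and `xₘ` itself shadow the orbit of `xₘ`, so
uniqueness forces `fᵐ z = xₘ`. Conversely, any point that shadows `x₀, …, xₘ` and hits `xₘ`
at time `m` shadows the whole extension, hence is `z`.
-/

def extendByOrbit {α : Type*} (f : α → α) (m : ℕ) (x : ℕ → α) (i : ℕ) : α :=
  if i ≤ m then x i else f^[i - m] (x m)

theorem extendByOrbit_of_le {α : Type*} {f : α → α} {m i : ℕ} {x : ℕ → α} (hi : i ≤ m) :
    extendByOrbit f m x i = x i :=
  if_pos hi

theorem extendByOrbit_add {α : Type*} {f : α → α} {m : ℕ} {x : ℕ → α} (k : ℕ) :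
    extendByOrbit f m x (m + k) = f^[k] (x m) := by
  unfold extendByOrbit
  split_ifs with hk
  · obtain rfl : k = 0 := by omega
    rfl
  · rw [Nat.add_sub_cancel_left]

section

variable {f : X → X} {ε δ : ℝ} {m : ℕ} {x : ℕ → X}

theorem pseudoOrbit_extendByOrbit (hδ : 0 < δ)
    (hx : ∀ i < m, dist (f (x i)) (x (i + 1)) < δ) : PseudoOrbit f δ (extendByOrbit f m x) := by
  intro i
  rcases lt_or_ge i m with hi | hi
  · rw [extendByOrbit_of_le hi.le, extendByOrbit_of_le hi]
    exact hx i hi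
  · obtain ⟨k, rfl⟩ := Nat.exists_eq_add_of_le hi
    rw [extendByOrbit_add, add_assoc, extendByOrbit_add, iterate_succ_apply', dist_self]
    exact hδ

theorem shadowsFrom_extendByOrbit {z : X} (hε : 0 < ε)
    (hz : ∀ i ≤ m, dist (f^[i] z) (x i) < ε) (hzm : f^[m] z = x m) :
    ShadowsFrom f ε z (extendByOrbit f m x) := by
  intro i
  rcases le_or_gt i m with hi | hi
  · rw [extendByOrbit_of_le hi]
    exact hz i hi
  · obtain ⟨k, rfl⟩ := Nat.exists_eq_add_of_le hi.le
    rw [extendByOrbit_add, add_comm, iterate_add_apply, hzm, dist_self]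
    exact hε

theorem pseudoOrbit_orbit (hδ : 0 < δ) (p : X) : PseudoOrbit f δ (fun i => f^[i] p) :=
  fun i => by dsimp only; rw [iterate_succ_apply', dist_self]; exact hδ

theorem shadowsFrom_orbit (hε : 0 < ε) (p : X) : ShadowsFrom f ε p (fun i => f^[i] p) :=
  fun i => by dsimp only; rw [dist_self]; exact hε

theorem ShadowsFrom.shift {z : X} (h : ShadowsFrom f ε z x) (m : ℕ) :
    ShadowsFrom f ε (f^[m] z) (fun i => x (m + i)) :=
  fun i => by dsimp only; rw [← iterate_add_apply, add_comm m i]; exact h (i + m)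

theorem existsUnique_hShadow_of_existsUnique_shadow (hε : 0 < ε) (hδ : 0 < δ)
    (H : ∀ x, PseudoOrbit f δ x → ∃! z, ShadowsFrom f ε z x)
    (hx : ∀ i < m, dist (f (x i)) (x (i + 1)) < δ) :
    ∃! z, (∀ i ≤ m, dist (f^[i] z) (x i) < ε) ∧ f^[m] z = x m := by
  obtain ⟨z, hz, hz_uniq⟩ := H _ (pseudoOrbit_extendByOrbit hδ hx)
  have hzm : f^[m] z = x m := by
    obtain ⟨w, -, hw_uniq⟩ := H _ (pseudoOrbit_orbit hδ (x m))
    have hshift := hz.shift m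
    simp only [extendByOrbit_add] at hshift
    exact (hw_uniq _ hshift).trans (hw_uniq _ (shadowsFrom_orbit hε (x m))).symm
  refine ⟨z, ⟨fun i hi => ?_, hzm⟩, fun y hy => hz_uniq y (shadowsFrom_extendByOrbit hε hy.1 hy.2)⟩
  simpa only [extendByOrbit_of_le hi] using hz i

end

theorem uniqueShadowing_implies_uniqueHShadowing_general
    {X : Type*} [MetricSpace X] (f : X → X)
    (h : HasUniqueShadowing f) : HasUniqueHShadowing f := by
  obtain ⟨η, hη, H⟩ := h
  refine ⟨η, hη, fun ε hε hεη => ?_⟩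
  obtain ⟨δ, hδ, Hδ⟩ := H ε hε hεη
  exact ⟨δ, hδ, fun m x hx => existsUnique_hShadow_of_existsUnique_shadow hε hδ Hδ hx⟩

theorem uniqueShadowing_implies_uniqueHShadowing
    {X : Type*} [MetricSpace X] [CompactSpace X] (f : X → X) (hf : Continuous f)
    (h : HasUniqueShadowing f) : HasUniqueHShadowing f :=
  uniqueShadowing_implies_uniqueHShadowing_general f h
end

section
/- The identity map on X = {1/2^n : n≥0} ∪ {0} ⊂ ℝ has unique h-shadowing but not unique shadowing. -/
open Filter Topology Function

variable {X : Type*} [MetricSpace X]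

noncomputable abbrev IdExampleSpace : Type :=
  ↥(({0} : Set ℝ) ∪ {x : ℝ | ∃ n : ℕ, x = (1/2) ^ n})

/-!
For the identity, the end condition `f^[m] z = x m` forces `z = x m`, so unique h-shadowing
only asks that finite `δ`-chains stay `ε`-close to their last point. In `X` every point
`a = 2⁻ⁿ` is at distance at least `a / 2` from all other points, so a `δ`-chain either is
constant or lies in `[0, 2δ)`. Unique shadowing fails because `0` is not isolated: every fixed
point close to `0` shadows the constant pseudo-orbit at `0`.
-/

theorem hasUniqueHShadowing_id_iff :
    HasUniqueHShadowing (id : X → X) ↔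
      ∃ η > 0, ∀ ε, 0 < ε → ε < η → ∃ δ > 0, ∀ (m : ℕ) (x : ℕ → X),
        (∀ i < m, dist (x i) (x (i + 1)) < δ) → ∀ i ≤ m, dist (x m) (x i) < ε := by
  have shadowed_iff : ∀ (ε : ℝ) (m : ℕ) (x : ℕ → X),
      (∃! z, (∀ i ≤ m, dist (id^[i] z) (x i) < ε) ∧ id^[m] z = x m) ↔
        ∀ i ≤ m, dist (x m) (x i) < ε := by
    intro ε m x
    simp only [iterate_id, id_eq]
    exact ⟨fun ⟨_, ⟨h, rfl⟩, _⟩ => h, fun h => ⟨x m, ⟨h, rfl⟩, fun _ hz => hz.2⟩⟩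
  simp only [HasUniqueHShadowing, shadowed_iff, id_eq]

theorem not_hasUniqueShadowing_id (a : X) [(𝓝[≠] a).NeBot] :
    ¬ HasUniqueShadowing (id : X → X) := by
  rintro ⟨η, hη, h⟩
  obtain ⟨δ, hδ, hsh⟩ := h (η / 2) (half_pos hη) (half_lt_self hη)
  obtain ⟨w, -, huniq⟩ := hsh (fun _ => a) (fun _ => by simpa using hδ)
  obtain ⟨b, hb, hba⟩ := Metric.nhdsWithin_basis_ball.neBot_iff.mp ‹_› (half_pos hη)
  have shadows : ∀ z, dist z a < η / 2 → ShadowsFrom id (η / 2) z (fun _ => a) :=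
    fun z hz i => by simpa using hz
  have hbw : b = w := huniq b (shadows b hb)
  have haw : a = w := huniq a (shadows a (by simpa using half_pos hη))
  exact hba (hbw.trans haw.symm)

theorem half_pow_div_two_le_abs_sub {n k : ℕ} (h : k ≠ n) :
    (1 / 2 : ℝ) ^ n / 2 ≤ |(1 / 2 : ℝ) ^ n - (1 / 2) ^ k| := by
  have step : ∀ {i j : ℕ}, i < j → (1 / 2 : ℝ) ^ j ≤ (1 / 2) ^ i / 2 := fun hij =>
    calc (1 / 2 : ℝ) ^ _ ≤ (1 / 2) ^ (_ + 1) :=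
          pow_le_pow_of_le_one (by norm_num) (by norm_num) hij
      _ = _ := by ring
  have hn : (0 : ℝ) ≤ (1 / 2) ^ n := by positivity
  have hk : (0 : ℝ) ≤ (1 / 2) ^ k := by positivity
  rcases h.lt_or_gt with hkn | hnk
  · linarith [step hkn, neg_abs_le ((1 / 2 : ℝ) ^ n - (1 / 2) ^ k)]
  · linarith [step hnk, le_abs_self ((1 / 2 : ℝ) ^ n - (1 / 2) ^ k)]

namespace IdExampleSpace

theorem val_nonneg (a : IdExampleSpace) : 0 ≤ (a : ℝ) := by
  rcases a.2 with h | ⟨n, h⟩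
  · rw [Set.mem_singleton_iff.mp h]
  · rw [h]; positivity

theorem half_le_dist {a b : IdExampleSpace} (h : b ≠ a) : (a : ℝ) / 2 ≤ dist a b := by
  rw [Subtype.dist_eq, Real.dist_eq]
  rcases a.2 with ha | ⟨n, ha⟩
  · simp [Set.mem_singleton_iff.mp ha]
  rcases b.2 with hb | ⟨k, hb⟩
  · rw [Set.mem_singleton_iff.mp hb, sub_zero, abs_of_nonneg (val_nonneg a)]
    linarith [val_nonneg a]
  · have hkn : k ≠ n := by
      rintro rfl
      exact h (Subtype.ext (hb.trans ha.symm))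
    rw [ha, hb]
    exact half_pow_div_two_le_abs_sub hkn

theorem eq_of_dist_lt {a b : IdExampleSpace} {δ : ℝ} (hab : dist a b < δ) (ha : 2 * δ ≤ a) :
    b = a := by
  by_contra h
  linarith [half_le_dist h]

theorem eq_or_lt_of_dist_lt {a b : IdExampleSpace} {δ : ℝ} (hab : dist a b < δ) :
    a = b ∨ ((a : ℝ) < 2 * δ ∧ (b : ℝ) < 2 * δ) := by
  by_cases ha : 2 * δ ≤ a
  · exact Or.inl (eq_of_dist_lt hab ha).symm
  by_cases hb : 2 * δ ≤ b
  · exact Or.inl (eq_of_dist_lt (dist_comm a b ▸ hab) hb)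
  exact Or.inr ⟨not_le.mp ha, not_le.mp hb⟩

theorem eq_or_lt_of_chain {δ : ℝ} {x : ℕ → IdExampleSpace} {i m : ℕ}
    (hx : ∀ j < m, dist (x j) (x (j + 1)) < δ) (hi : i ≤ m) :
    x i = x m ∨ ((x i : ℝ) < 2 * δ ∧ (x m : ℝ) < 2 * δ) := by
  induction m, hi using Nat.le_induction with
  | base => exact Or.inl rfl
  | succ m _ ih =>
    rcases ih (fun j hj => hx j (by omega)) with h₁ | h₁ <;>
      rcases eq_or_lt_of_dist_lt (hx m m.lt_succ_self) with h₂ | h₂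
    · exact Or.inl (h₁.trans h₂)
    · exact Or.inr (h₁ ▸ h₂)
    · exact Or.inr ⟨h₁.1, h₂ ▸ h₁.2⟩
    · exact Or.inr ⟨h₁.1, h₂.2⟩

theorem dist_lt_of_chain {δ : ℝ} (hδ : 0 < δ) {x : ℕ → IdExampleSpace} {i m : ℕ}
    (hx : ∀ j < m, dist (x j) (x (j + 1)) < δ) (hi : i ≤ m) :
    dist (x m) (x i) < 2 * δ := by
  rcases eq_or_lt_of_chain hx hi with h | ⟨hxi, hxm⟩
  · rw [h, dist_self]
    positivity
  · rw [Subtype.dist_eq, Real.dist_eq, abs_sub_lt_iff]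
    constructor <;> linarith [val_nonneg (x i), val_nonneg (x m)]

instance nhdsNE_zero_neBot : (𝓝[≠] (⟨0, Or.inl rfl⟩ : IdExampleSpace)).NeBot := by
  rw [Metric.nhdsWithin_basis_ball.neBot_iff]
  intro ε hε
  obtain ⟨n, hn⟩ := exists_pow_lt_of_lt_one hε (by norm_num : (1 / 2 : ℝ) < 1)
  refine ⟨⟨(1 / 2) ^ n, Or.inr ⟨n, rfl⟩⟩, ?_, ?_⟩
  · rwa [Metric.mem_ball, Subtype.dist_eq, Real.dist_eq, sub_zero, abs_of_pos (by positivity)]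
  · exact fun h => by simpa using congrArg Subtype.val h

end IdExampleSpace

theorem id_uniqueHShadowing_not_uniqueShadowing :
    HasUniqueHShadowing (id : IdExampleSpace → IdExampleSpace) ∧
    ¬ HasUniqueShadowing (id : IdExampleSpace → IdExampleSpace) := by
  refine ⟨hasUniqueHShadowing_id_iff.mpr ⟨1, one_pos, fun ε hε _ => ?_⟩,
    not_hasUniqueShadowing_id ⟨0, Or.inl rfl⟩⟩
  refine ⟨ε / 2, half_pos hε, fun m x hx i hi => ?_⟩
  simpa [mul_div_cancel₀] using IdExampleSpace.dist_lt_of_chain (half_pos hε) hx hi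
end

section
/- Let (X,f) be a dynamical system on a compact metric space where f is injective, mixing, and has two-sided shadowing, and X contains more than one point. Then f is not positively n-expansive for any n∈ℕ. -/
/-!
Fix two points `p ≠ q`. Mixing joins any two of them by orbit segments of one common length `L`
whose ends are `δ/2`-close to them, so any word over `{p, q}` indexed by `ℤ` is followed by a
two-sided `δ`-pseudo-orbit. For the word marking only block `-(j + 1)` with `q`, the shadowing
orbits `z j` all shadow the same forward sequence, so their forward orbits stay `r`-close to that
of `z 0`. They are pairwise distinct: by injectivity `z j 0` determines the backward orbit of
`z j`, and at time `-(j + 1) L` the orbit `z j` is near `q` while every other `z j'` is near `p`.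
Hence the points forward `r`-close to `z 0 0` form an infinite set.
-/

open Filter Topology Function

variable {X : Type*} [MetricSpace X]

theorem AtMostCard.finite {α : Type*} {S : Set α} {n : ℕ} (h : AtMostCard S n) : S.Finite :=
  let ⟨F, _, hF⟩ := h
  F.finite_toSet.subset hF

namespace FullOrbit

variable {α : Type*} {f : α → α} {z z' : ℤ → α}

theorem iterate_apply (hz : FullOrbit f z) (i : ℤ) (k : ℕ) : f^[k] (z i) = z (i + k) := by
  induction k with
  | zero => simp
  | succ k ih => rw [iterate_succ_apply', ih, hz]; push_cast; ring_nf

theorem apply_eq_of_le (hinj : Injective f) (hz : FullOrbit f z) (hz' : FullOrbit f z')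
    {m : ℤ} (hm : z m = z' m) {i : ℤ} (hi : i ≤ m) : z i = z' i := by
  induction i, hi using Int.leInductionDown with
  | base => exact hm
  | pred i _ ih => exact hinj (by rw [hz, hz', sub_add_cancel, ih])

end FullOrbit

theorem Mixing.eventually_exists_mem_ball_iterate_mem_ball {f : X → X} (hmix : Mixing f)
    (a b : X) {η : ℝ} (hη : 0 < η) :
    ∀ᶠ m in atTop, ∃ u ∈ Metric.ball a η, f^[m] u ∈ Metric.ball b η := by
  obtain ⟨N, hN⟩ := hmix _ _ Metric.isOpen_ball Metric.isOpen_ball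
    ⟨a, Metric.mem_ball_self hη⟩ ⟨b, Metric.mem_ball_self hη⟩
  filter_upwards [eventually_ge_atTop N] with m hm
  obtain ⟨_, ⟨u, hu, rfl⟩, hmu⟩ := hN m hm
  exact ⟨u, hu, hmu⟩

/-- Block `k`, covering the times `L * k, …, L * k + L - 1`, is the orbit segment of
`u (w k) (w (k + 1))`. -/
def concatOrbitSegments {α ι : Type*} (f : α → α) (L : ℕ) (u : ι → ι → α) (w : ℤ → ι) :
    ℤ → α :=
  fun i => f^[(i % L).toNat] (u (w (i / L)) (w (i / L + 1)))

theorem concatOrbitSegments_mul_add {α ι : Type*} {f : α → α} {L : ℕ} {u : ι → ι → α}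
    {w : ℤ → ι} (k : ℤ) {m : ℕ} (hm : m < L) :
    concatOrbitSegments f L u w (L * k + m) = f^[m] (u (w k) (w (k + 1))) := by
  have hL : (L : ℤ) ≠ 0 := by omega
  have hm' : (m : ℤ) < L := by exact_mod_cast hm
  have hdiv : (L * k + m : ℤ) / L = k := by
    rw [add_comm, Int.add_mul_ediv_left _ _ hL, Int.ediv_eq_zero_of_lt (by positivity) hm',
      zero_add]
  have hmod : (L * k + m : ℤ) % L = m := by
    rw [add_comm, Int.add_mul_emod_self_left, Int.emod_eq_of_lt (by positivity) hm']
  simp only [concatOrbitSegments, hdiv, hmod, Int.toNat_natCast]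

theorem twoSidedPseudoOrbit_concatOrbitSegments {ι : Type*} {f : X → X} {L : ℕ}
    {u : ι → ι → X} (w : ℤ → ι) (hL : 0 < L) (pt : ι → X) {η : ℝ}
    (hu : ∀ a b, dist (u a b) (pt a) < η) (hfu : ∀ a b, dist (f^[L] (u a b)) (pt b) < η) :
    TwoSidedPseudoOrbit f (2 * η) (concatOrbitSegments f L u w) := by
  intro i
  obtain ⟨k, m, hm, rfl⟩ : ∃ k : ℤ, ∃ m : ℕ, m < L ∧ i = L * k + m := by
    have := Int.emod_nonneg i (b := L) (by omega)
    have := Int.emod_lt_of_pos i (b := L) (by omega)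
    exact ⟨i / L, (i % L).toNat, by omega,
      by rw [Int.toNat_of_nonneg (by omega), Int.mul_ediv_add_emod]⟩
  have hη : 0 < η := dist_nonneg.trans_lt (hu (w 0) (w 0))
  rw [concatOrbitSegments_mul_add k hm, ← iterate_succ_apply' f m]
  rcases (Nat.succ_le_of_lt hm).lt_or_eq with hm1 | hm1
  · rw [show (L * k + m + 1 : ℤ) = L * k + (m + 1 : ℕ) by push_cast; ring,
      concatOrbitSegments_mul_add k hm1, dist_self]
    positivity
  · rw [show (L * k + m + 1 : ℤ) = L * (k + 1) + (0 : ℕ) by rw [← hm1]; push_cast; ring,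
      concatOrbitSegments_mul_add (k + 1) hL, iterate_zero_apply, hm1, two_mul]
    exact (dist_triangle_right _ _ (pt (w (k + 1)))).trans_lt (add_lt_add (hfu _ _) (hu _ _))

theorem Mixing.exists_pseudoOrbits_separated_in_past {f : X → X} (hmix : Mixing f) {δ : ℝ}
    (hδ : 0 < δ) (p q : X) :
    ∃ (x : ℕ → ℤ → X) (t : ℕ → ℤ), ∀ j, TwoSidedPseudoOrbit f δ (x j) ∧
      (∀ i ≥ 0, x j i = x 0 i) ∧ t j ≤ 0 ∧ dist (x j (t j)) q < δ ∧
      ∀ j' ≠ j, dist (x j' (t j)) p < δ := by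
  obtain ⟨L, hsegment, hL⟩ := ((eventually_all.2 fun ab : Bool × Bool =>
    hmix.eventually_exists_mem_ball_iterate_mem_ball (cond ab.1 q p) (cond ab.2 q p)
      (half_pos hδ)).and (eventually_gt_atTop 0)).exists
  choose u hu hfu using fun a b => hsegment (a, b)
  have hpo (w : ℤ → Bool) : TwoSidedPseudoOrbit f δ (concatOrbitSegments f L u w) := by
    simpa only [mul_div_cancel₀ δ (two_ne_zero' ℝ)] using
      twoSidedPseudoOrbit_concatOrbitSegments (η := δ / 2) w hL (fun b => cond b q p) hu hfu
  have hu' (a b : Bool) : dist (u a b) (cond a q p) < δ := (hu a b).trans (half_lt_self hδ)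
  set w : ℕ → ℤ → Bool := fun j k => decide (k = -(j + 1 : ℤ)) with hw
  have hw_nonneg (j : ℕ) (k : ℤ) (hk : 0 ≤ k) : w j k = false := by simp [hw]; omega
  have hx_mark (j j' : ℕ) : concatOrbitSegments f L u (w j') (L * -(j + 1 : ℤ)) =
      u (w j' (-(j + 1 : ℤ))) (w j' (-(j + 1 : ℤ) + 1)) := by
    simpa using concatOrbitSegments_mul_add (f := f) (u := u) (w := w j') (-(j + 1 : ℤ)) hL
  refine ⟨fun j => concatOrbitSegments f L u (w j), fun j => L * -(j + 1 : ℤ),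
    fun j => ⟨hpo (w j), fun i hi => ?_, ?_, ?_, fun j' hj' => ?_⟩⟩
  · have := Int.ediv_nonneg hi (Int.natCast_nonneg L)
    simp only [concatOrbitSegments, hw_nonneg _ _ this, hw_nonneg _ (i / L + 1) (by omega)]
  · exact Int.mul_nonpos_of_nonneg_of_nonpos (by positivity) (by omega)
  · have : w j (-(j + 1 : ℤ)) = true := by simp [hw]
    beta_reduce
    rw [hx_mark, this]
    exact hu' true _
  · have : w j' (-(j + 1 : ℤ)) = false := by simp [hw]; omega
    beta_reduce
    rw [hx_mark, this]
    exact hu' false _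

theorem Mixing.exists_infinite_setOf_forall_dist_iterate_lt {f : X → X} (hmix : Mixing f)
    (hinj : Injective f) (hts : HasTwoSidedShadowing f) (hX : ∃ x y : X, x ≠ y) {r : ℝ}
    (hr : 0 < r) : ∃ x, {y | ∀ k : ℕ, dist (f^[k] x) (f^[k] y) < r}.Infinite := by
  obtain ⟨p, q, hpq⟩ := hX
  obtain ⟨ε, hε, hεr, hεpq⟩ : ∃ ε > 0, 2 * ε < r ∧ 4 * ε ≤ dist p q :=
    ⟨min r (dist p q) / 4, by have := dist_pos.2 hpq; positivity,
      by linarith [min_le_left r (dist p q)], by linarith [min_le_right r (dist p q)]⟩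
  obtain ⟨δ, hδ, hshadow⟩ := hts ε hε
  obtain ⟨x, t, hx⟩ := hmix.exists_pseudoOrbits_separated_in_past (lt_min hδ hε) p q
  choose z hz hzx using fun j =>
    hshadow (x j) fun i => ((hx j).1 i).trans_le (min_le_left _ _)
  refine ⟨z 0 0, Set.infinite_of_injective_forall_mem (f := fun j => z j 0) ?_ fun j k => ?_⟩
  · intro j j' hjj'
    by_contra hne
    obtain ⟨-, -, htj, hxq, hxp⟩ := hx j
    have hzt := (hz j).apply_eq_of_le hinj (hz j') hjj' htj
    have h₁ : dist p (x j' (t j)) < ε :=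
      dist_comm p _ ▸ (hxp j' (Ne.symm hne)).trans_le (min_le_right _ _)
    have h₂ : dist (x j' (t j)) (z j (t j)) < ε := by rw [hzt, dist_comm]; exact hzx j' _
    have h₃ : dist (x j (t j)) q < ε := hxq.trans_le (min_le_right _ _)
    linarith [dist_triangle4 p (x j' (t j)) (z j (t j)) q,
      dist_triangle (z j (t j)) (x j (t j)) q, hzx j (t j)]
  · have hj := hzx j k
    rw [(hx j).2.1 k (Int.natCast_nonneg k)] at hj
    simp only [(hz 0).iterate_apply, (hz j).iterate_apply, zero_add]
    linarith [dist_triangle_right (z 0 k) (z j k) (x 0 k), hzx 0 k]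

theorem mixing_injective_twoSidedShadowing_not_posNExpansive_general
    {X : Type*} [MetricSpace X] (f : X → X)
    (hinj : Function.Injective f) (hmix : Mixing f)
    (hts : HasTwoSidedShadowing f) (hX : ∃ x y : X, x ≠ y) :
    ∀ n : ℕ, 1 ≤ n → ¬ PosNExpansive f n := by
  rintro n - ⟨r, hr, hexp⟩
  obtain ⟨x, hx⟩ := hmix.exists_infinite_setOf_forall_dist_iterate_lt hinj hts hX hr
  exact hx (hexp x).finite

theorem mixing_injective_twoSidedShadowing_not_posNExpansive
    {X : Type*} [MetricSpace X] [CompactSpace X] (f : X → X) (hf : Continuous f)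
    (hinj : Function.Injective f) (hmix : Mixing f)
    (hts : HasTwoSidedShadowing f) (hX : ∃ x y : X, x ≠ y) :
    ∀ n : ℕ, 1 ≤ n → ¬ PosNExpansive f n :=
  mixing_injective_twoSidedShadowing_not_posNExpansive_general f hinj hmix hts hX
end
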